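/- Let 𝒫 be a nonempty set of Borel probability measures on ℝ^n with sublinear expectation Ê[ξ] := sup_{P∈𝒫} E_P[ξ], whose coordinate random variables X_1,…,X_n are independent under Ê (i.e., for each 1 ≤ j < n, X_{j+1} is independent of (X_1,…,X_j) under Ê). If Q_1,…,Q_n are Borel probability measures on ℝ such that E_{Q_i}[ψ] ≤ Ê[ψ(X_i)] for every bounded Lipschitz ψ : ℝ → ℝ and every i ≤ n, then the product measure Q_1 ⊗ ⋯ ⊗ Q_n satisfies E_{Q_1⊗⋯⊗Q_n}[φ] ≤ Ê[φ] for every bounded Lipschitz function φ : ℝ^n → ℝ. -/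

import Mathlib

/-!
Induct on the number `j` of coordinates, comparing `∫ φ d(Q₁ ⊗ ⋯ ⊗ Qⱼ)` with
`Ê[φ(X₁, …, Xⱼ)]`. By Fubini, integrating out the last coordinate leaves
`x ↦ ∫ φ(x, t) dQⱼ(t)`, which the hypothesis on `Qⱼ` bounds pointwise by
`g x = Ê[φ(x, Xⱼ)]`. Since `g` is again bounded Lipschitz, the induction hypothesis bounds
its integral by `Ê[g(X₁, …, Xⱼ₋₁)]`, and independence of `Xⱼ` from its predecessors
identifies this with `Ê[φ(X₁, …, Xⱼ)]`.
-/

open MeasureTheory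

/-- Sublinear expectation on `ℝ^n` associated with a set of probability measures:
`Ê[ξ] = sup_{P ∈ Pset} E_P[ξ]`. -/
noncomputable def SE (n : ℕ) (Pset : Set (Measure (Fin n → ℝ)))
    (ξ : (Fin n → ℝ) → ℝ) : ℝ :=
  ⨆ P : Pset, ∫ x, ξ x ∂(P : Measure (Fin n → ℝ))

def BLip {E : Type*} [PseudoMetricSpace E] (φ : E → ℝ) : Prop :=
  (∃ K : NNReal, LipschitzWith K φ) ∧ ∃ M : ℝ, ∀ x, |φ x| ≤ M

theorem LipschitzWith.pi {α ι : Type*} [PseudoEMetricSpace α] [Fintype ι]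
    {X : ι → Type*} [∀ i, PseudoEMetricSpace (X i)] {K : NNReal} {f : α → ∀ i, X i}
    (hf : ∀ i, LipschitzWith K fun a => f a i) : LipschitzWith K f :=
  fun x y => edist_pi_le_iff.2 fun i => hf i x y

section Snoc

variable {E : Type*} [PseudoEMetricSpace E] {j : ℕ}

theorem lipschitzWith_snoc_left (t : E) :
    LipschitzWith 1 fun x : Fin j → E => (Fin.snoc x t : Fin (j + 1) → E) := by
  refine LipschitzWith.pi fun i => ?_
  induction i using Fin.lastCases with
  | last => simpa using LipschitzWith.const' t
  | cast k => simpa using LipschitzWith.eval (α := fun _ : Fin j => E) k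

theorem lipschitzWith_snoc_right (x : Fin j → E) :
    LipschitzWith 1 fun t : E => (Fin.snoc x t : Fin (j + 1) → E) := by
  refine LipschitzWith.pi fun i => ?_
  induction i using Fin.lastCases with
  | last => simp only [Fin.snoc_last]; exact LipschitzWith.id
  | cast k => simpa using LipschitzWith.const' (x k)

end Snoc

theorem integral_pi_eq_integral_integral_snoc {E G : Type*} [MeasurableSpace E]
    [NormedAddCommGroup G] [NormedSpace ℝ G] {j : ℕ} (μ : Fin (j + 1) → Measure E)
    [∀ i, SigmaFinite (μ i)] {f : (Fin (j + 1) → E) → G} (hf : Integrable f (Measure.pi μ)) :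
    ∫ z, f z ∂Measure.pi μ =
      ∫ x, ∫ t, f (Fin.snoc x t) ∂μ (Fin.last j) ∂Measure.pi fun k => μ k.castSucc := by
  have hmp := measurePreserving_piFinSuccAbove μ (Fin.last j)
  simp only [Fin.succAbove_last] at hmp
  have hsymm : ∀ p : E × (Fin j → E),
      (MeasurableEquiv.piFinSuccAbove (fun _ => E) (Fin.last j)).symm p = Fin.snoc p.2 p.1 := by
    intro p
    simp [MeasurableEquiv.piFinSuccAbove, Fin.insertNthEquiv, Fin.insertNth_last']
  set e := MeasurableEquiv.piFinSuccAbove (fun _ => E) (Fin.last j)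
  rw [← hmp.symm.integral_comp e.symm.measurableEmbedding,
    integral_prod_symm (fun p => f (e.symm p))
      ((hmp.symm.integrable_comp_emb e.symm.measurableEmbedding).2 hf)]
  simp only [hsymm]

namespace BLip

variable {X : Type*} [PseudoMetricSpace X]

theorem const (c : ℝ) : BLip fun _ : X => c :=
  ⟨⟨0, LipschitzWith.const c⟩, |c|, fun _ => le_rfl⟩

theorem comp_lipschitzWith {Y : Type*} [PseudoMetricSpace Y] {φ : Y → ℝ} (hφ : BLip φ)
    {K : NNReal} {f : X → Y} (hf : LipschitzWith K f) : BLip fun x => φ (f x) := by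
  obtain ⟨⟨L, hL⟩, M, hM⟩ := hφ
  exact ⟨⟨L * K, hL.comp hf⟩, M, fun x => hM (f x)⟩

theorem integrable [MeasurableSpace X] [BorelSpace X] {φ : X → ℝ} (hφ : BLip φ)
    (μ : Measure X) [IsFiniteMeasure μ] : Integrable φ μ := by
  obtain ⟨⟨K, hK⟩, M, hM⟩ := hφ
  exact Integrable.of_bound hK.continuous.aestronglyMeasurable M (.of_forall hM)

theorem integral_param {Y : Type*} [MeasurableSpace Y] (ν : Measure Y) [IsProbabilityMeasure ν]
    {F : X → Y → ℝ} (hint : ∀ x, Integrable (F x) ν) {K : NNReal}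
    (hlip : ∀ y, LipschitzWith K fun x => F x y) {M : ℝ} (hM : ∀ x y, |F x y| ≤ M) :
    BLip fun x => ∫ y, F x y ∂ν := by
  refine ⟨⟨K, LipschitzWith.of_le_add_mul K fun x x' => ?_⟩, M, fun x => ?_⟩
  · calc ∫ y, F x y ∂ν ≤ ∫ y, (F x' y + K * dist x x') ∂ν :=
          integral_mono (hint x) ((hint x').add (integrable_const _))
            fun y => (hlip y).le_add_mul x x'
      _ = ∫ y, F x' y ∂ν + K * dist x x' := by
          rw [integral_add (hint x') (integrable_const _), integral_const, probReal_univ,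
            one_smul]
  · simpa using
      norm_integral_le_of_norm_le_const (μ := ν) (C := M) (f := F x) (.of_forall (hM x))

end BLip

section SublinearExpectation

variable {n : ℕ} {Pset : Set (Measure (Fin n → ℝ))}

theorem SE_bddAbove (hprob : ∀ P ∈ Pset, IsProbabilityMeasure P) {ξ : (Fin n → ℝ) → ℝ} {M : ℝ}
    (hM : ∀ x, |ξ x| ≤ M) :
    BddAbove (Set.range fun P : Pset => ∫ x, ξ x ∂(P : Measure (Fin n → ℝ))) := by
  refine ⟨M, ?_⟩
  rintro _ ⟨⟨P, hP⟩, rfl⟩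
  have := hprob P hP
  simpa using (le_abs_self _).trans
    (norm_integral_le_of_norm_le_const (μ := P) (C := M) (f := ξ) (.of_forall hM))

theorem SE_le_SE_add_of_le (hne : Pset.Nonempty) (hprob : ∀ P ∈ Pset, IsProbabilityMeasure P)
    {ξ η : (Fin n → ℝ) → ℝ} (hξ : BLip ξ) (hη : BLip η) {c : ℝ}
    (h : ∀ x, ξ x ≤ η x + c) : SE n Pset ξ ≤ SE n Pset η + c := by
  have := hne.to_subtype
  obtain ⟨-, M, hM⟩ := id hη
  refine ciSup_le fun ⟨P, hP⟩ => ?_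
  have := hprob P hP
  calc ∫ x, ξ x ∂P ≤ ∫ x, (η x + c) ∂P :=
        integral_mono (hξ.integrable P) ((hη.integrable P).add (integrable_const c)) h
    _ = ∫ x, η x ∂P + c := by
        rw [integral_add (hη.integrable P) (integrable_const c), integral_const, probReal_univ,
          one_smul]
    _ ≤ SE n Pset η + c := by
        gcongr
        exact le_ciSup (SE_bddAbove hprob hM) ⟨P, hP⟩

theorem SE_const (hne : Pset.Nonempty) (hprob : ∀ P ∈ Pset, IsProbabilityMeasure P)
    (c : ℝ) : SE n Pset (fun _ => c) = c := by
  have := hne.to_subtype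
  have hP : ∀ P : Pset, ∫ _, c ∂(P : Measure (Fin n → ℝ)) = c := fun ⟨P, hP⟩ => by
    have := hprob P hP
    simp
  simp only [SE, hP, ciSup_const]

theorem abs_SE_le (hne : Pset.Nonempty) (hprob : ∀ P ∈ Pset, IsProbabilityMeasure P)
    {ξ : (Fin n → ℝ) → ℝ} (hξ : BLip ξ) {M : ℝ} (hM : ∀ x, |ξ x| ≤ M) :
    |SE n Pset ξ| ≤ M := by
  refine abs_le.2 ⟨?_, ?_⟩
  · calc -M = SE n Pset (fun _ => -M) := (SE_const hne hprob _).symm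
      _ ≤ SE n Pset ξ + 0 :=
          SE_le_SE_add_of_le hne hprob (BLip.const _) hξ fun x => by
            linarith [neg_abs_le (ξ x), hM x]
      _ = SE n Pset ξ := add_zero _
  · calc SE n Pset ξ ≤ SE n Pset (fun _ => 0) + M :=
          SE_le_SE_add_of_le hne hprob hξ (BLip.const _) fun x => by
            linarith [le_abs_self (ξ x), hM x]
      _ = M := by rw [SE_const hne hprob, zero_add]

theorem BLip.SE_param (hne : Pset.Nonempty) (hprob : ∀ P ∈ Pset, IsProbabilityMeasure P)
    {X : Type*} [PseudoMetricSpace X] {F : X → (Fin n → ℝ) → ℝ}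
    (hF : ∀ x, BLip (F x)) {K : NNReal} (hlip : ∀ y, LipschitzWith K fun x => F x y) {M : ℝ}
    (hM : ∀ x y, |F x y| ≤ M) : BLip fun x => SE n Pset (F x) :=
  ⟨⟨K, LipschitzWith.of_le_add_mul K fun x x' =>
      SE_le_SE_add_of_le hne hprob (hF x) (hF x') fun y => (hlip y).le_add_mul x x'⟩,
    M, fun x => abs_SE_le hne hprob (hF x) (hM x)⟩

end SublinearExpectation

/-- Coordinates are `0`-based: `x ⟨j, hjn⟩` is the paper's `X_{j+1}` and `Fin.take j _ x`
is `(X_1, …, X_j)`. -/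
def IndepOfPrefix (n : ℕ) (Pset : Set (Measure (Fin n → ℝ))) (j : ℕ) (hjn : j < n) : Prop :=
  ∀ φ : (Fin (j + 1) → ℝ) → ℝ, BLip φ →
    SE n Pset (fun x => φ (Fin.take (j + 1) hjn x)) =
      SE n Pset fun x => SE n Pset fun x' => φ (Fin.snoc (Fin.take j hjn.le x) (x' ⟨j, hjn⟩))

theorem indepOfPrefix_zero {n : ℕ} {Pset : Set (Measure (Fin n → ℝ))} (hne : Pset.Nonempty)
    (hprob : ∀ P ∈ Pset, IsProbabilityMeasure P) (hn : 0 < n) : IndepOfPrefix n Pset 0 hn := by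
  intro φ _
  simp only [Fin.take_succ_eq_snoc 0 hn, Fin.take_zero, SE_const hne hprob]

theorem integral_pi_le_SE_take {n : ℕ} {Pset : Set (Measure (Fin n → ℝ))}
    (hne : Pset.Nonempty) (hprob : ∀ P ∈ Pset, IsProbabilityMeasure P)
    (hindep : ∀ j (hjn : j < n), IndepOfPrefix n Pset j hjn)
    (Q : Fin n → Measure ℝ) [∀ i, IsProbabilityMeasure (Q i)]
    (hQ : ∀ i : Fin n, ∀ ψ : ℝ → ℝ, BLip ψ → ∫ t, ψ t ∂(Q i) ≤ SE n Pset (fun x => ψ (x i))) :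
    ∀ j (hjn : j ≤ n) (φ : (Fin j → ℝ) → ℝ), BLip φ →
      ∫ x, φ x ∂(Measure.pi fun i => Q (Fin.castLE hjn i)) ≤
        SE n Pset (fun x => φ (Fin.take j hjn x))
  | 0, hjn, φ, _ => by
    have hdefault : ∀ x : Fin n → ℝ, Fin.take 0 hjn x = default := fun _ => Subsingleton.elim _ _
    simp only [hdefault, SE_const hne hprob, integral_unique, probReal_univ, one_smul]
    exact (congrArg φ (Subsingleton.elim _ _)).le
  | j + 1, hjn, φ, hφ => by
    have hjn' : j < n := hjn
    set μ := Measure.pi fun i : Fin j => Q (Fin.castLE hjn'.le i)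
    obtain ⟨⟨K, hK⟩, M, hM⟩ := id hφ
    have hlip_left : ∀ t, LipschitzWith K fun x : Fin j → ℝ => φ (Fin.snoc x t) :=
      fun t => by simpa [Function.comp_def] using hK.comp (lipschitzWith_snoc_left t)
    have hslice : ∀ x : Fin j → ℝ, BLip fun t => φ (Fin.snoc x t) :=
      fun x => hφ.comp_lipschitzWith (lipschitzWith_snoc_right x)
    set g : (Fin j → ℝ) → ℝ := fun x => SE n Pset fun x' => φ (Fin.snoc x (x' ⟨j, hjn'⟩))
    have hg : BLip g := BLip.SE_param hne hprob
      (fun x => (hslice x).comp_lipschitzWith (LipschitzWith.eval _))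
      (fun _ => hlip_left _) (fun _ _ => hM _)
    have hinner : BLip fun x => ∫ t, φ (Fin.snoc x t) ∂Q ⟨j, hjn'⟩ :=
      BLip.integral_param _ (fun x => (hslice x).integrable _) hlip_left (fun _ _ => hM _)
    calc ∫ x, φ x ∂(Measure.pi fun i => Q (Fin.castLE hjn i))
        = ∫ x, ∫ t, φ (Fin.snoc x t) ∂Q ⟨j, hjn'⟩ ∂μ :=
          integral_pi_eq_integral_integral_snoc _ (hφ.integrable _)
      _ ≤ ∫ x, g x ∂μ :=
          integral_mono (hinner.integrable _) (hg.integrable _) fun x => hQ _ _ (hslice x)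
      _ ≤ SE n Pset (fun x => g (Fin.take j hjn'.le x)) :=
          integral_pi_le_SE_take hne hprob hindep Q hQ j _ g hg
      _ = SE n Pset (fun x => φ (Fin.take (j + 1) hjn x)) := (hindep j hjn' φ hφ).symm

/-- If the coordinates are independent under `Ê` and each `Q_i` is dominated by
`Ê` on bounded Lipschitz functions of the `i`-th coordinate, then the product
measure `Q_1 ⊗ ⋯ ⊗ Q_n` is dominated by `Ê` on bounded Lipschitz functions. -/
theorem product_measure_dominated
    (n : ℕ)
    (Pset : Set (Measure (Fin n → ℝ))) (hne : Pset.Nonempty)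
    (hprob : ∀ P ∈ Pset, IsProbabilityMeasure P)
    (hindep : ∀ j : ℕ, 1 ≤ j → ∀ hjn : j < n,
      ∀ φ : (Fin (j + 1) → ℝ) → ℝ, BLip φ →
        SE n Pset (fun x => φ (fun i => x (Fin.castLE hjn i))) =
          SE n Pset (fun x => SE n Pset (fun x' =>
            φ (Fin.snoc (fun i : Fin j => x (Fin.castLE hjn.le i)) (x' ⟨j, hjn⟩)))))
    (Q : Fin n → Measure ℝ) [∀ i, IsProbabilityMeasure (Q i)]
    (hQ : ∀ i : Fin n, ∀ ψ : ℝ → ℝ, BLip ψ →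
      ∫ t, ψ t ∂(Q i) ≤ SE n Pset (fun x => ψ (x i))) :
    ∀ φ : (Fin n → ℝ) → ℝ, BLip φ →
      ∫ x, φ x ∂(Measure.pi Q) ≤ SE n Pset φ := by
  have hindep' : ∀ j (hjn : j < n), IndepOfPrefix n Pset j hjn := by
    rintro (_ | j) hjn
    · exact indepOfPrefix_zero hne hprob hjn
    · exact hindep (j + 1) j.succ_pos hjn
  intro φ hφ
  exact integral_pi_le_SE_take hne hprob hindep' Q hQ n le_rfl φ hφ
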